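/- arXiv:2211.12440 — 3 statements merged into one kernel-verified Lean document; each statement's English description precedes it below -/
import Mathlib

section
/- Let R = {x ∈ ℝ³ : x₃(x₁² + x₂²) = x₁³ and (x₁, x₂) ≠ (0, 0)}. Then there is no point b ∈ R with ‖b − (0,0,1)‖₂ < 1/2; consequently the point a = (0, 0, 1) lies in the zero set V = {x ∈ ℝ³ : x₃(x₁² + x₂²) = x₁³} (the Cartan umbrella) but not in the closure of R, so R is not dense in V. -/
lemma coord_le_norm (x : EuclideanSpace ℝ (Fin 3)) (i : Fin 3) : |x i| ≤ ‖x‖ := by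
  have h := EuclideanSpace.norm_eq x
  rw [h]
  have h1 : |x i| = Real.sqrt (‖x i‖ ^ 2) := by
    rw [Real.sqrt_sq_eq_abs]; simp
  rw [h1]
  apply Real.sqrt_le_sqrt
  exact Finset.single_le_sum (fun j _ => sq_nonneg ‖x j‖) (Finset.mem_univ i)

/-- **Cartan umbrella.** There is no point of the regular locus
`R = {x : x₃(x₁²+x₂²) = x₁³, (x₁,x₂) ≠ (0,0)}` within Euclidean distance `1/2`
of `a = (0,0,1)`; hence `a` lies in `V = {x : x₃(x₁²+x₂²) = x₁³}` but not in
the closure of `R`, so `R` is not dense in `V`. -/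
theorem stmt_1
    (V R : Set (EuclideanSpace ℝ (Fin 3)))
    (hV : V = {x | x 2 * ((x 0) ^ 2 + (x 1) ^ 2) = (x 0) ^ 3})
    (hR : R = {x ∈ V | ¬ (x 0 = 0 ∧ x 1 = 0)})
    (a : EuclideanSpace ℝ (Fin 3))
    (ha0 : a 0 = 0) (ha1 : a 1 = 0) (ha2 : a 2 = 1) :
    (∀ b ∈ R, ¬ ‖b - a‖ < 1 / 2) ∧
    a ∈ V ∧ a ∉ closure R ∧ ¬ V ⊆ closure R := by
  have key : ∀ b ∈ R, ¬ ‖b - a‖ < 1 / 2 := by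
    intro b hb hlt
    rw [hR, Set.mem_setOf_eq, hV, Set.mem_setOf_eq] at hb
    obtain ⟨heq, hne⟩ := hb
    have h0 : |b 0 - a 0| < 1 / 2 := lt_of_le_of_lt (by
      simpa using coord_le_norm (b - a) 0) hlt
    have h1 : |b 1 - a 1| < 1 / 2 := lt_of_le_of_lt (by
      simpa using coord_le_norm (b - a) 1) hlt
    have h2 : |b 2 - a 2| < 1 / 2 := lt_of_le_of_lt (by
      simpa using coord_le_norm (b - a) 2) hlt
    rw [ha0, sub_zero] at h0
    rw [ha1, sub_zero] at h1
    rw [ha2] at h2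
    rw [abs_lt] at h0 h1 h2
    have hb2 : b 2 > 1 / 2 := by linarith [h2.1]
    have hpos : (b 0) ^ 2 + (b 1) ^ 2 > 0 := by
      rcases (not_and_or.mp hne) with h | h
      · positivity
      · positivity
    -- b2 (b0² + b1²) > (b0²+b1²)/2 ≥ b0²/2 > b0³ since |b0| < 1/2
    nlinarith [sq_nonneg (b 0), sq_nonneg (b 1), sq_nonneg (b 0 - 1/2),
      mul_pos (show (0:ℝ) < b 2 - 1/2 by linarith) hpos]
  refine ⟨key, ?_, ?_, ?_⟩
  · rw [hV]; simp [Set.mem_setOf_eq, ha0, ha1, ha2]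
  · intro hcl
    rw [Metric.mem_closure_iff] at hcl
    obtain ⟨b, hbR, hbd⟩ := hcl (1/2) (by norm_num)
    exact key b hbR (by rwa [dist_comm, dist_eq_norm] at hbd)
  · intro hsub
    apply (show a ∉ closure R by
      intro hcl
      rw [Metric.mem_closure_iff] at hcl
      obtain ⟨b, hbR, hbd⟩ := hcl (1/2) (by norm_num)
      exact key b hbR (by rwa [dist_comm, dist_eq_norm] at hbd))
    exact hsub (by rw [hV]; simp [Set.mem_setOf_eq, ha0, ha1, ha2])
end

section
/- Let h₀, h₁, …, h_l ∈ ℝ[x₁,…,x_n] be polynomials of degree at most d. Assume h₀ is non-negative on V(h), where h = (h₁,…,h_l), and that the image h₀(V(h)) is a finite set. Set r := |h₀(V(h))|, u := (1/2)·b(n, d, l+1), and w := max{d·(r−1), u + d} (where d·(r−1) is read as 0 if r = 0). Then there exists σ ∈ Σ²_w[x] such that h₀ − σ vanishes identically on V(h). -/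
open MvPolynomial

/-- `bit(d)`: the number of binary digits of `d`, with `bit(0) = 1`. -/
def bitNum (d : ℕ) : ℕ := if d = 0 then 1 else Nat.log2 d + 1

/-- The bound `b(n,d,s) = 2^(2^(2^(max{2,d}^(4^n)) + s^(2^n)·max{2,d}^(16^n·bit(d))))`
from Lombardi–Perrucci–Roy's effective Positivstellensatz. -/
def bFun (n d s : ℕ) : ℕ :=
  2 ^ 2 ^ (2 ^ (max 2 d) ^ 4 ^ n + s ^ 2 ^ n * (max 2 d) ^ (16 ^ n * bitNum d))

/-- `σ ∈ Σ²_w`: `σ` is a finite sum of squares of polynomials of (total) degree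
at most `w`. -/
def IsSOS {σv : Type*} (w : ℕ) (p : MvPolynomial σv ℝ) : Prop :=
  ∃ (k : ℕ) (q : Fin k → MvPolynomial σv ℝ),
    (∀ i, (q i).totalDegree ≤ w) ∧ p = ∑ i, q i ^ 2

lemma totalDegree_polyAeval {n : ℕ} (p : Polynomial ℝ) (f : MvPolynomial (Fin n) ℝ) :
    (Polynomial.aeval f p).totalDegree ≤ p.natDegree * f.totalDegree := by
  rw [Polynomial.aeval_eq_sum_range]
  refine (MvPolynomial.totalDegree_finset_sum _ _).trans (Finset.sup_le fun i hi => ?_)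
  refine (MvPolynomial.totalDegree_smul_le _ _).trans ?_
  refine (MvPolynomial.totalDegree_pow _ _).trans ?_
  exact Nat.mul_le_mul_right _ (Nat.lt_succ_iff.mp (Finset.mem_range.mp hi))

lemma eval_polyAeval {n : ℕ} (x : Fin n → ℝ) (p : Polynomial ℝ) (f : MvPolynomial (Fin n) ℝ) :
    eval x (Polynomial.aeval f p) = Polynomial.eval (eval x f) p := by
  have hmv : ∀ q : MvPolynomial (Fin n) ℝ, MvPolynomial.aeval x q = eval x q := fun q =>
    RingHom.congr_fun (MvPolynomial.coe_aeval_eq_eval x) q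
  rw [← hmv, ← Polynomial.aeval_algHom_apply (MvPolynomial.aeval x) f p, hmv,
    ← Polynomial.coe_aeval_eq_eval]

/-- **Lemma 2.18.** If `h₀` (degree ≤ d) is non-negative on `V(h)` and takes
finitely many values there, say `r` of them, then with
`u = b(n,d,l+1)/2` and `w = max{d(r-1), u+d}` there is `σ ∈ Σ²_w[x]` such that
`h₀ - σ` vanishes on `V(h)`. -/
theorem stmt_10 {n l : ℕ} (d : ℕ)
    (h₀ : MvPolynomial (Fin n) ℝ) (h : Fin l → MvPolynomial (Fin n) ℝ)
    (hdeg₀ : h₀.totalDegree ≤ d) (hdeg : ∀ j, (h j).totalDegree ≤ d)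
    (V : Set (Fin n → ℝ)) (hV : V = {x | ∀ j, eval x (h j) = 0})
    (hnonneg : ∀ x ∈ V, 0 ≤ eval x h₀)
    (hfin : ((fun x => eval x h₀) '' V).Finite)
    (r u w : ℕ)
    (hr : r = ((fun x => eval x h₀) '' V).ncard)
    (hu : u = bFun n d (l + 1) / 2)
    (hw : w = max (d * (r - 1)) (u + d)) :
    ∃ σ : MvPolynomial (Fin n) ℝ, IsSOS w σ ∧ ∀ x ∈ V, eval x (h₀ - σ) = 0 := by
  classical
  rcases Nat.eq_zero_or_pos r with hr0 | hrpos
  · -- the image is empty, hence `V` is empty; take `σ = 0`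
    have himg : ((fun x => eval x h₀) '' V) = ∅ := by
      rw [← Set.ncard_eq_zero hfin, ← hr, hr0]
    have hVempty : ∀ x, x ∉ V := by
      intro x hx
      exact absurd (Set.mem_image_of_mem _ hx) (himg ▸ Set.notMem_empty _)
    refine ⟨0, ⟨0, Fin.elim0, fun i => i.elim0, by simp⟩, fun x hx => absurd hx (hVempty x)⟩
  · -- the image is a nonempty finite set; use Lagrange interpolation
    set S : Finset ℝ := hfin.toFinset with hS
    have hScard : S.card = r := by
      rw [hr, Set.ncard_eq_toFinset_card _ hfin]
    have hSnonneg : ∀ t ∈ S, (0:ℝ) ≤ t := by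
      intro t ht
      rw [hS, Set.Finite.mem_toFinset] at ht
      obtain ⟨x, hxV, hxe⟩ := ht
      exact hxe ▸ hnonneg x hxV
    have hinj : Set.InjOn (id : ℝ → ℝ) S := Function.injective_id.injOn
    set P : ℝ → MvPolynomial (Fin n) ℝ :=
      fun t => Polynomial.aeval h₀ (Lagrange.basis S id t) with hP
    set σ : MvPolynomial (Fin n) ℝ :=
      ∑ t ∈ S, (C (Real.sqrt t) * P t) ^ 2 with hσ
    have hdegP : ∀ t ∈ S, (C (Real.sqrt t) * P t).totalDegree ≤ w := by
      intro t ht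
      refine (MvPolynomial.totalDegree_mul _ _).trans ?_
      rw [MvPolynomial.totalDegree_C, zero_add]
      refine (totalDegree_polyAeval _ _).trans ?_
      rw [Lagrange.natDegree_basis hinj ht, hScard]
      calc (r - 1) * h₀.totalDegree ≤ (r - 1) * d := Nat.mul_le_mul_left _ hdeg₀
        _ = d * (r - 1) := Nat.mul_comm _ _
        _ ≤ w := hw ▸ le_max_left _ _
    refine ⟨σ, ?_, ?_⟩
    · -- σ is a sum of squares of degree ≤ w
      refine ⟨S.card, fun i => C (Real.sqrt ((S.equivFin.symm i : ℝ))) *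
        P (S.equivFin.symm i : ℝ), fun i => hdegP _ (S.equivFin.symm i).2, ?_⟩
      rw [hσ, ← Finset.sum_attach S (fun t => (C (Real.sqrt t) * P t) ^ 2),
        ← Finset.univ_eq_attach]
      exact Fintype.sum_equiv S.equivFin _ _ (fun a => by simp)
    · -- h₀ - σ vanishes on V
      intro x hx
      set c : ℝ := eval x h₀ with hc
      have hcS : c ∈ S := by
        rw [hS, Set.Finite.mem_toFinset]
        exact Set.mem_image_of_mem _ hx
      have hevalσ : eval x σ = c := by
        rw [hσ, map_sum]
        rw [Finset.sum_eq_single_of_mem c hcS]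
        · rw [map_pow, map_mul, eval_C, hP, eval_polyAeval, ← hc]
          have : Polynomial.eval c (Lagrange.basis S id c) = 1 := by
            have := Lagrange.eval_basis_self hinj hcS
            simpa using this
          rw [this, mul_one, Real.sq_sqrt (hSnonneg c hcS)]
        · intro t ht htc
          rw [map_pow, map_mul, eval_C, hP, eval_polyAeval, ← hc]
          have : Polynomial.eval c (Lagrange.basis S id t) = 0 := by
            have := Lagrange.eval_basis_of_ne (v := id) (s := S) htc hcS
            simpa using this
          rw [this, mul_zero]
          ring
      rw [map_sub, hevalσ, ← hc, sub_self]
end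

section
/- (Constancy of the objective along piecewise-differentiable paths in the KKT variety.) Let h₀, h₁, …, h_l ∈ ℝ[x₁,…,x_n] and set h̄ = (h₀, h₁,…,h_l). Let φ : [0,1] → ℝⁿ × ℝˡ, written φ(τ) = (x(τ), λ(τ)), be a continuous map with φ(τ) ∈ V(h̄_KKT) for all τ ∈ [0,1], and suppose there exist 0 = a₀ < a₁ < … < a_{s+1} = 1 such that φ is differentiable on each open interval (a_i, a_{i+1}). Then h₀(x(0)) = h₀(x(1)). Consequently, h₀ is constant on each semi-algebraically path connected component of V(h̄_KKT). -/
/-!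
Along a path in the KKT variety each constraint `h_j ∘ x` vanishes identically, so its derivative
`∇h_j(x) · x'` is zero wherever the path is differentiable. The Lagrange condition
`∇h₀ = Σ λ_j ∇h_j` then forces `(h₀ ∘ x)' = 0` on every open piece of the partition, and by the
mean value theorem and continuity `h₀ ∘ x` takes the same value at the two ends of each closed piece.
-/

open MvPolynomial

/-- The KKT variety `V(h̄_KKT) ⊆ ℝⁿ × ℝˡ` associated with `h̄ = (h₀, h₁,…,h_l)`:
pairs `(x, λ)` with `h_j(x) = 0` for all `j` and `∇h₀(x) = Σ_j λ_j ∇h_j(x)`. -/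
def KKTset {n l : ℕ} (h₀ : MvPolynomial (Fin n) ℝ)
    (h : Fin l → MvPolynomial (Fin n) ℝ) : Set ((Fin n → ℝ) × (Fin l → ℝ)) :=
  {p | (∀ j, eval p.1 (h j) = 0) ∧
       ∀ i, eval p.1 (pderiv i h₀) = ∑ j, p.2 j * eval p.1 (pderiv i (h j))}

open Set Filter Topology

theorem MvPolynomial.hasDerivAt_eval_comp {𝕜 σ : Type*} [NontriviallyNormedField 𝕜] [Fintype σ]
    {x : 𝕜 → σ → 𝕜} {x' : σ → 𝕜} {τ : 𝕜} (hx : HasDerivAt x x' τ) (p : MvPolynomial σ 𝕜) :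
    HasDerivAt (fun t => eval (x t) p) (∑ i, eval (x τ) (pderiv i p) * x' i) τ := by
  induction p using MvPolynomial.induction_on with
  | C c => simpa using hasDerivAt_const τ c
  | add p q hp hq =>
    simp only [map_add, add_mul, Finset.sum_add_distrib]
    exact hp.add hq
  | mul_X p i hp =>
    classical
    simp only [map_mul, eval_X]
    refine (hp.mul (hasDerivAt_pi.1 hx i)).congr_deriv ?_
    simp only [Derivation.leibniz, pderiv_X, smul_eq_mul, map_add, map_mul, eval_X, add_mul,
      Finset.sum_add_distrib, Finset.sum_mul, Pi.single_apply, mul_ite, mul_one, mul_zero,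
      apply_ite (eval (x τ)), map_zero, ite_mul, zero_mul, Finset.sum_ite_eq, Finset.mem_univ, if_true]
    rw [add_comm]
    exact congrArg (_ + ·) (Finset.sum_congr rfl fun j _ => by ring)

theorem KKTset.sum_pderiv_mul_eq_zero {n l : ℕ} {h₀ : MvPolynomial (Fin n) ℝ}
    {h : Fin l → MvPolynomial (Fin n) ℝ} {p : (Fin n → ℝ) × (Fin l → ℝ)} (hp : p ∈ KKTset h₀ h)
    {v : Fin n → ℝ} (hv : ∀ j, ∑ i, eval p.1 (pderiv i (h j)) * v i = 0) :
    ∑ i, eval p.1 (pderiv i h₀) * v i = 0 := by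
  simp only [hp.2, Finset.sum_mul, mul_assoc]
  rw [Finset.sum_comm]
  simp [← Finset.mul_sum, hv]

theorem KKTset.hasDerivAt_eval_zero {n l : ℕ} {h₀ : MvPolynomial (Fin n) ℝ}
    {h : Fin l → MvPolynomial (Fin n) ℝ} {φ : ℝ → (Fin n → ℝ) × (Fin l → ℝ)} {τ : ℝ}
    (hmem : ∀ᶠ t in 𝓝 τ, φ t ∈ KKTset h₀ h) (hφ : DifferentiableAt ℝ φ τ) :
    HasDerivAt (fun t => eval (φ t).1 h₀) 0 τ := by
  have hx : HasDerivAt (fun t => (φ t).1) (deriv φ τ).1 τ := hφ.hasDerivAt.fst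
  have hconstraint : ∀ j, ∑ i, eval (φ τ).1 (pderiv i (h j)) * (deriv φ τ).1 i = 0 := fun j =>
    (hasDerivAt_eval_comp hx (h j)).unique
      ((hasDerivAt_const τ 0).congr_of_eventuallyEq (hmem.mono fun t ht => ht.1 j))
  simpa [sum_pderiv_mul_eq_zero hmem.self_of_nhds hconstraint] using hasDerivAt_eval_comp hx h₀

theorem eq_of_continuousOn_Icc_of_hasDerivAt_zero {f : ℝ → ℝ} {a b : ℝ} (hab : a < b)
    (hf : ContinuousOn f (Icc a b)) (hf' : ∀ x ∈ Ioo a b, HasDerivAt f 0 x) : f a = f b := by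
  obtain ⟨c, -, hc⟩ := exists_hasDerivAt_eq_slope f (fun _ => 0) hab hf hf'
  rw [eq_comm, div_eq_zero_iff, sub_eq_zero] at hc
  exact (hc.resolve_right (sub_ne_zero.2 hab.ne')).symm

theorem eq_of_forall_le_eq_succ {α : Type*} {f : ℕ → α} {s : ℕ} (hf : ∀ i ≤ s, f i = f (i + 1)) :
    f 0 = f (s + 1) := by
  induction s with
  | zero => exact hf 0 le_rfl
  | succ s ih => exact (ih fun i hi => hf i (hi.trans s.le_succ)).trans (hf (s + 1) le_rfl)

/-- **Lemma 2.19 (constancy of the objective along piecewise-differentiable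
paths in the KKT variety).** If `φ = (x(·), λ(·)) : [0,1] → ℝⁿ × ℝˡ` is a
continuous map with values in `V(h̄_KKT)` which is differentiable on each open
interval of a partition `0 = a₀ < a₁ < ⋯ < a_{s+1} = 1`, then
`h₀(x(0)) = h₀(x(1))`; consequently `h₀` is constant on each semi-algebraically
path connected component of `V(h̄_KKT)`. -/
theorem stmt_11 {n l : ℕ}
    (h₀ : MvPolynomial (Fin n) ℝ) (h : Fin l → MvPolynomial (Fin n) ℝ)
    (φ : ℝ → (Fin n → ℝ) × (Fin l → ℝ))
    (hcont : ContinuousOn φ (Set.Icc 0 1))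
    (hmem : ∀ τ ∈ Set.Icc (0 : ℝ) 1, φ τ ∈ KKTset h₀ h)
    (s : ℕ) (a : ℕ → ℝ) (ha0 : a 0 = 0) (has : a (s + 1) = 1)
    (hmono : ∀ i ≤ s, a i < a (i + 1))
    (hdiff : ∀ i ≤ s, ∀ τ ∈ Set.Ioo (a i) (a (i + 1)), DifferentiableAt ℝ φ τ) :
    eval (φ 0).1 h₀ = eval (φ 1).1 h₀ := by
  have ha : MonotoneOn a (Iic (s + 1)) :=
    (strictMonoOn_Iic_of_lt_succ fun m hm => hmono m (Nat.lt_succ_iff.1 hm)).monotoneOn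
  have hpiece : ∀ i ≤ s, Icc (a i) (a (i + 1)) ⊆ Icc 0 1 := fun i hi => by
    rw [← ha0, ← has]
    exact Icc_subset_Icc (ha (by simp) (by simp; omega) (Nat.zero_le _))
      (ha (by simp; omega) (by simp) (by omega))
  rw [← ha0, ← has]
  refine eq_of_forall_le_eq_succ (f := fun i => eval (φ (a i)).1 h₀) fun i hi =>
    eq_of_continuousOn_Icc_of_hasDerivAt_zero (hmono i hi) ?_ fun τ hτ =>
      KKTset.hasDerivAt_eval_zero (eventually_of_mem (isOpen_Ioo.mem_nhds hτ) fun t ht =>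
        hmem t (hpiece i hi (Ioo_subset_Icc_self ht))) (hdiff i hi τ hτ)
  exact (continuous_eval h₀).comp_continuousOn
    (continuous_fst.comp_continuousOn (hcont.mono (hpiece i hi)))
end
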